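/- Let C be an [n,k] linear code over F_q with hull of dimension ℓ, with generator matrix [H; A] where H (ℓ×n) generates Hull(C). Let D be any invertible ℓ×ℓ matrix and C' any (k−ℓ)×ℓ matrix. Then the matrix G̃ = [[H, D],[A, C']] generates an LCD code of length n+ℓ, hence a shortest LCD embedding of C. -/

import Mathlib

open Matrix

variable {F : Type*} [Field F]

/-- Row space of a matrix: the code generated by its rows. -/
def rowSpace {m ι : Type*} (G : Matrix m ι F) : Submodule F (ι → F) :=
  Submodule.span F (Set.range G)

/-- Dual of a code with respect to the form `⟨x, c⟩ = ∑ i, x i * s (c i)`.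
For `s = id` this is the Euclidean dual; for `s = (· ^ q)` the Hermitian dual. -/
def sDual {ι : Type*} [Fintype ι] (s : F → F) (C : Submodule F (ι → F)) :
    Submodule F (ι → F) where
  carrier := {x | ∀ c ∈ C, ∑ i, x i * s (c i) = 0}
  zero_mem' := by intro c hc; simp
  add_mem' := by
    intro a b ha hb c hc
    simp [Pi.add_apply, add_mul, Finset.sum_add_distrib, ha c hc, hb c hc]
  smul_mem' := by
    intro r a ha c hc
    simp [Pi.smul_apply, smul_eq_mul, mul_assoc, ← Finset.mul_sum, ha c hc]

/-- The hull of a code: its intersection with its dual. -/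
def sHull {ι : Type*} [Fintype ι] (s : F → F) (C : Submodule F (ι → F)) :
    Submodule F (ι → F) :=
  C ⊓ sDual s C

/-- `Ct` is an LCD embedding of `C`: `Ct` is LCD and puncturing `Ct` on the
complement of some coordinate subset recovers `C`. -/
def IsLCDEmbedding {ι : Type*} [Fintype ι] {N : ℕ} (s : F → F)
    (C : Submodule F (ι → F)) (Ct : Submodule F (Fin N → F)) : Prop :=
  sHull s Ct = ⊥ ∧ ∃ f : ι → Fin N, Function.Injective f ∧
    Submodule.map (LinearMap.funLeft F F f) Ct = C

/-!
If `x = (a, b) G̃` lies in the hull of the row space of `G̃ = [[H, D], [A, C']]`, write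
`x = (u, v)` with `u = aH + bA ∈ C` and `v = aD + bC'`. Orthogonality of `x` to the rows `(H, D)`
gives `Dv = 0`, since the rows of `H` lie in the hull of `C` and hence are orthogonal to `u`; so
`v = 0`. Orthogonality to the rows `(A, C')` then makes `u` orthogonal to all of `C`, so `u` lies in
the hull, i.e. `u = wH`. Linear independence of the rows of `[H; A]` forces `b = 0`, whence
`aD = v = 0` and `a = 0`.
-/

section

variable {l m ι : Type*}

theorem mem_rowSpace_iff [Fintype m] {G : Matrix m ι F} {x : ι → F} :
    x ∈ rowSpace G ↔ ∃ c, c ᵥ* G = x := by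
  have : rowSpace G = LinearMap.range G.vecMulLinear := (range_vecMulLinear G).symm
  rw [this, LinearMap.mem_range]
  rfl

theorem mem_sDual_id_iff [Fintype ι] {C : Submodule F (ι → F)} {x : ι → F} :
    x ∈ sDual id C ↔ ∀ c ∈ C, x ⬝ᵥ c = 0 :=
  Iff.rfl

theorem mem_sDual_id_rowSpace_iff [Fintype ι] {G : Matrix m ι F} {x : ι → F} :
    x ∈ sDual id (rowSpace G) ↔ G *ᵥ x = 0 := by
  change rowSpace G ≤ LinearMap.ker (dotProductBilin F F x) ↔ _
  rw [rowSpace, Submodule.span_le, funext_iff]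
  refine Set.range_subset_iff.trans ?_
  simp [mulVec, dotProduct_comm]

theorem mulVec_eq_zero_of_rowSpace_le_sDual [Fintype ι] {H : Matrix l ι F}
    {C : Submodule F (ι → F)} (hH : rowSpace H ≤ sDual id C) {u : ι → F} (hu : u ∈ C) :
    H *ᵥ u = 0 :=
  funext fun i => mem_sDual_id_iff.1 (hH (Submodule.subset_span ⟨i, rfl⟩)) u hu

theorem map_funLeft_inl_rowSpace_fromBlocks {n : Type*} (H : Matrix l ι F) (D : Matrix l n F)
    (A : Matrix m ι F) (C' : Matrix m n F) :
    Submodule.map (LinearMap.funLeft F F Sum.inl) (rowSpace (fromBlocks H D A C')) =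
      rowSpace (fromRows H A) := by
  rw [rowSpace, rowSpace, Submodule.map_span,
    ← Set.range_comp (f := (fromBlocks H D A C' : l ⊕ m → ι ⊕ n → F))]
  congr 2
  ext (i | i) j <;> rfl

theorem sHull_rowSpace_fromBlocks_eq_bot [Fintype l] [Fintype m] [Fintype ι]
    [DecidableEq l] {H : Matrix l ι F} {A : Matrix m ι F}
    (hH : rowSpace H = sHull id (rowSpace (fromRows H A)))
    (hind : LinearIndependent F (fromRows H A)) {D : Matrix l l F} (hD : IsUnit D)
    (C' : Matrix m l F) :
    sHull id (rowSpace (fromBlocks H D A C')) = ⊥ := by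
  rw [eq_bot_iff]
  intro x hx
  rw [sHull, Submodule.mem_inf, mem_rowSpace_iff, mem_sDual_id_rowSpace_iff] at hx
  obtain ⟨⟨c, rfl⟩, hx_dual⟩ := hx
  obtain ⟨a, b, rfl⟩ : ∃ a b, c = Sum.elim a b := ⟨_, _, (Sum.elim_comp_inl_inr c).symm⟩
  rw [vecMul_fromBlocks, Sum.elim_comp_inl, Sum.elim_comp_inr] at hx_dual ⊢
  rw [fromBlocks_mulVec, Sum.elim_comp_inl, Sum.elim_comp_inr, ← Sum.elim_zero_zero,
    Sum.elim_eq_iff] at hx_dual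
  set u := a ᵥ* H + b ᵥ* A with hu_def
  have hu : u ∈ rowSpace (fromRows H A) :=
    mem_rowSpace_iff.2 ⟨Sum.elim a b, sumElim_vecMul_fromRows ..⟩
  have hHu : H *ᵥ u = 0 := mulVec_eq_zero_of_rowSpace_le_sDual (hH.le.trans inf_le_right) hu
  have hv : a ᵥ* D + b ᵥ* C' = 0 :=
    mulVec_injective_iff_isUnit.2 hD (by simpa [hHu] using hx_dual.1)
  have hAu : A *ᵥ u = 0 := by simpa [hv] using hx_dual.2
  have huH : u ∈ rowSpace H := hH ▸ ⟨hu, mem_sDual_id_rowSpace_iff.2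
    (by rw [fromRows_mulVec, hHu, hAu, Sum.elim_zero_zero])⟩
  obtain ⟨w, hw⟩ := mem_rowSpace_iff.1 huH
  have hb : b = 0 := by
    have := vecMul_injective_iff.2 hind (a₁ := Sum.elim (a - w) b) (a₂ := 0) (by
      change Sum.elim (a - w) b ᵥ* fromRows H A = 0 ᵥ* fromRows H A
      rw [sumElim_vecMul_fromRows, zero_vecMul, sub_vecMul, hw, hu_def]; abel)
    exact (Sum.elim_eq_iff.1 (this.trans Sum.elim_zero_zero.symm)).2
  have ha : a = 0 := vecMul_injective_iff_isUnit.2 hD (by simpa [hb] using hv)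
  simp [hu_def, ha, hb]

end

theorem stmt10_general {F : Type*} [Field F] {n k ℓ : ℕ}
    {C : Submodule F (Fin n → F)}
    (H : Matrix (Fin ℓ) (Fin n) F) (A : Matrix (Fin (k - ℓ)) (Fin n) F)
    (hH : rowSpace H = sHull (id : F → F) C)
    (hC : rowSpace (fromRows H A) = C)
    (hind : LinearIndependent F (fromRows H A))
    (D : Matrix (Fin ℓ) (Fin ℓ) F) (hD : IsUnit D)
    (C' : Matrix (Fin (k - ℓ)) (Fin ℓ) F) :
    sHull (id : F → F) (rowSpace (fromBlocks H D A C')) = ⊥ ∧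
      Submodule.map (LinearMap.funLeft F F (Sum.inl : Fin n → Fin n ⊕ Fin ℓ))
        (rowSpace (fromBlocks H D A C')) = C := by
  subst hC
  exact ⟨sHull_rowSpace_fromBlocks_eq_bot hH hind hD C',
    map_funLeft_inl_rowSpace_fromBlocks H D A C'⟩

/-- appending an invertible `D` to the hull rows and any `C'` to the rest yields a
(shortest) LCD embedding. -/
theorem stmt10 {F : Type*} [Field F] [Fintype F] {n k ℓ : ℕ}
    {C : Submodule F (Fin n → F)}
    (H : Matrix (Fin ℓ) (Fin n) F) (A : Matrix (Fin (k - ℓ)) (Fin n) F)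
    (hH : rowSpace H = sHull (id : F → F) C)
    (hC : rowSpace (fromRows H A) = C)
    (hind : LinearIndependent F (fromRows H A))
    (hl : ℓ = Module.finrank F ↥(sHull (id : F → F) C))
    (D : Matrix (Fin ℓ) (Fin ℓ) F) (hD : IsUnit D)
    (C' : Matrix (Fin (k - ℓ)) (Fin ℓ) F) :
    sHull (id : F → F) (rowSpace (fromBlocks H D A C')) = ⊥ ∧
      Submodule.map (LinearMap.funLeft F F (Sum.inl : Fin n → Fin n ⊕ Fin ℓ))
        (rowSpace (fromBlocks H D A C')) = C :=
  stmt10_general H A hH hC hind D hD C'
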